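/- Let L be a finite set of even cardinality. Every merging relation in Q_L lies in the image of the map alpha_L : P_L -> Q_L (over Z). -/

import Mathlib

/-
Common definitions: the graphical algebra `R_L` of [HMSV], its graded pieces
`V_L`, `W_L`, the relation modules `B_L`, `I_L`, the partitioned ("tilde")
modules, and the planarity notions coming from an embedding of the vertex set
in the unit circle.
-/

open scoped TensorProduct

set_option linter.unusedSectionVars false
set_option linter.unusedVariables false
set_option synthInstance.maxHeartbeats 1000000
set_option maxHeartbeats 1000000

noncomputable section

namespace HMSV

variable {α : Type} [DecidableEq α]

/-- A directed multigraph on the vertex type `α`: a multiset of directed edges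
(loops and repeated edges allowed). -/
abbrev Graph (α : Type) := Multiset (α × α)

/-- The degree (valence) of a vertex; a loop counts twice. -/
def deg (Γ : Graph α) (v : α) : ℕ :=
  (Γ.map Prod.fst).count v + (Γ.map Prod.snd).count v

/-- `Γ` is a regular graph of degree `k` on the finite vertex set `L`. -/
def IsRegOn (L : Finset α) (Γ : Graph α) (k : ℕ) : Prop :=
  (∀ v ∈ L, deg Γ v = k) ∧ ∀ v : α, v ∉ L → deg Γ v = 0

lemma deg_add (Γ Δ : Graph α) (v : α) : deg (Γ + Δ) v = deg Γ v + deg Δ v := by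
  simp [deg, Multiset.count_add]; omega

lemma IsRegOn.add {L : Finset α} {Γ Δ : Graph α} {k l : ℕ}
    (h : IsRegOn L Γ k) (h' : IsRegOn L Δ l) : IsRegOn L (Γ + Δ) (k + l) := by
  constructor
  · intro v hv; rw [deg_add, h.1 v hv, h'.1 v hv]
  · intro v hv; rw [deg_add, h.2 v hv, h'.2 v hv]

/-- A subset `U` is closed with respect to `Γ` if every edge of `Γ` meeting `U`
lies entirely inside `U`. -/
def ClosedIn (Γ : Graph α) (U : Finset α) : Prop := ∀ e ∈ Γ, (e.1 ∈ U ↔ e.2 ∈ U)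

lemma ClosedIn.add {Γ Δ : Graph α} {U : Finset α}
    (h : ClosedIn Γ U) (h' : ClosedIn Δ U) : ClosedIn (Γ + Δ) U := by
  intro e he
  rcases Multiset.mem_add.mp he with h'' | h''
  exacts [h e h'', h' e h'']

/-- The semigroup algebra over `ℤ` on the semigroup of graphs on `α`
(multiplication = disjoint union of edge multisets). -/
abbrev FreeA (α : Type) [DecidableEq α] := AddMonoidAlgebra ℤ (Graph α)

/-- The basis element corresponding to a graph. -/
def sgl (Γ : Graph α) : FreeA α := AddMonoidAlgebra.single Γ 1

/-- The loop, sign and Pluecker relators. -/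
def ringRels (α : Type) [DecidableEq α] : Set (FreeA α) :=
  {x | ∃ (Γ : Graph α) (v : α), (v, v) ∈ Γ ∧ x = sgl Γ} ∪
  {x | ∃ (Γ : Graph α) (a b : α), x = sgl (Γ + {(a, b)}) + sgl (Γ + {(b, a)})} ∪
  {x | ∃ (Γ : Graph α) (a b c d : α),
      x = sgl (Γ + {(a, b), (c, d)}) - sgl (Γ + {(a, d), (c, b)})
        - sgl (Γ + {(a, c), (b, d)})}

def relIdeal (α : Type) [DecidableEq α] : Ideal (FreeA α) := Ideal.span (ringRels α)

/-- The graphical ring.  Since the loop, sign and Pluecker relations preserve the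
degree function of a graph, for every finite `L ⊆ α` the ring `R_L` of [HMSV] sits
inside `RL α` as the span of the classes of regular graphs on `L`. -/
abbrev RL (α : Type) [DecidableEq α] := FreeA α ⧸ relIdeal α

/-- The class of a graph in the graphical ring. -/
def X (Γ : Graph α) : RL α := Ideal.Quotient.mk (relIdeal α) (sgl Γ)

/-- The first graded piece `V_L` of `R_L`, spanned by the matchings on `L`. -/
def VL (L : Finset α) : Submodule ℤ (RL α) :=
  Submodule.span ℤ {x | ∃ Γ, IsRegOn L Γ 1 ∧ x = X Γ}

/-- The second graded piece `W_L` of `R_L`. -/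
def WL (L : Finset α) : Submodule ℤ (RL α) :=
  Submodule.span ℤ {x | ∃ Γ, IsRegOn L Γ 2 ∧ x = X Γ}

/-- The full coordinate ring `R_L`, as a `ℤ`-submodule of `RL α`. -/
def RLfull (L : Finset α) : Submodule ℤ (RL α) :=
  Submodule.span ℤ {x | ∃ Γ k, IsRegOn L Γ k ∧ x = X Γ}

/-- `X Γ` as an element of `V_L`, for `Γ` a matching on `L`. -/
def vx {L : Finset α} {Γ : Graph α} (h : IsRegOn L Γ 1) : VL L :=
  ⟨X Γ, Submodule.subset_span ⟨Γ, h, rfl⟩⟩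

/-- The multiplication map `V_L ⊗ V_L → R` (its image is `W_L`, its kernel `B_L`). -/
def mulMap (L : Finset α) : (VL L) ⊗[ℤ] (VL L) →ₗ[ℤ] RL α :=
  TensorProduct.lift (((LinearMap.mul ℤ (RL α)).compl₁₂ (VL L).subtype (VL L).subtype))

/-- `B_L`, the kernel of the multiplication map `V_L ⊗ V_L → W_L`. -/
def BL (L : Finset α) : Submodule ℤ ((VL L) ⊗[ℤ] (VL L)) :=
  LinearMap.ker (mulMap L)

/-- The submodule of `V_L ⊗ V_L` by which one quotients to obtain `Sym²(V_L)`. -/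
def commSub (L : Finset α) : Submodule ℤ ((VL L) ⊗[ℤ] (VL L)) :=
  Submodule.span ℤ {z | ∃ x y : VL L, z = x ⊗ₜ[ℤ] y - y ⊗ₜ[ℤ] x}

/-- `Sym²(V_L)`, modelled as `(V_L ⊗ V_L)/⟨x⊗y - y⊗x⟩`. -/
abbrev Sym2V (L : Finset α) := ((VL L) ⊗[ℤ] (VL L)) ⧸ commSub L

/-- The quadratic relation space `I_L^{(2)} ⊆ Sym²(V_L)`: the image of `B_L`. -/
def I2 (L : Finset α) : Submodule ℤ (Sym2V L) :=
  (BL L).map (commSub L).mkQ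

/-- The simple binomial relations, as elements of `B_L ⊆ V_L ⊗ V_L`:
`X_{ΓΔ} ⊗ X_{Γ'Δ'} - X_{ΓΔ'} ⊗ X_{Γ'Δ}` for matchings `Δ, Δ'` on a four-element
subset `U ⊆ L` and matchings `Γ, Γ'` on `L \ U`. -/
def simpleBinsT (L : Finset α) : Set ((VL L) ⊗[ℤ] (VL L)) :=
  {t | ∃ (U : Finset α) (_ : U ⊆ L) (_ : U.card = 4)
      (Δ Δ' Γ Γ' : Graph α)
      (_ : IsRegOn U Δ 1) (_ : IsRegOn U Δ' 1)
      (_ : IsRegOn (L \ U) Γ 1) (_ : IsRegOn (L \ U) Γ' 1)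
      (h1 : IsRegOn L (Γ + Δ) 1) (h2 : IsRegOn L (Γ' + Δ') 1)
      (h3 : IsRegOn L (Γ + Δ') 1) (h4 : IsRegOn L (Γ' + Δ) 1),
    t = vx h1 ⊗ₜ[ℤ] vx h2 - vx h3 ⊗ₜ[ℤ] vx h4}

/-- The simple binomial relations as elements of `I_L^{(2)} ⊆ Sym²(V_L)`. -/
def simpleBinsSym2 (L : Finset α) : Set (Sym2V L) :=
  (commSub L).mkQ '' simpleBinsT L

/-- A partition of `L`: at least two pairwise disjoint pieces of even cardinality
covering `L`. -/
def IsPartitionOn (L : Finset α) (𝒰 : Finset (Finset α)) : Prop :=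
  2 ≤ 𝒰.card ∧ (∀ U ∈ 𝒰, U ⊆ L ∧ Even U.card) ∧
    (𝒰 : Set (Finset α)).PairwiseDisjoint id ∧ ∀ v ∈ L, ∃ U ∈ 𝒰, v ∈ U

/-- Index type for `tilde-W_L`: pairs `(Γ, 𝒰)` where `Γ` is a regular degree-two
graph on `L` and `𝒰` is a partition of `L` closed with respect to `Γ`. -/
def WIdx (L : Finset α) : Type :=
  {p : Graph α × Finset (Finset α) //
    IsRegOn L p.1 2 ∧ IsPartitionOn L p.2 ∧ ∀ U ∈ p.2, ClosedIn p.1 U}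

/-- The free module on pairs `(Γ, 𝒰)`; `tilde-W_L` is its quotient by the span of
`relsW L`. -/
abbrev FW (L : Finset α) := WIdx L →₀ ℤ

def wSingle {L : Finset α} (p : WIdx L) : FW L := Finsupp.single p 1

/-- Loop relators in `FW L`. -/
def loopRelsW (L : Finset α) : Set (FW L) :=
  {x | ∃ p : WIdx L, (∃ v, (v, v) ∈ p.1.1) ∧ x = wSingle p}

/-- Sign relators in `FW L`. -/
def signRelsW (L : Finset α) : Set (FW L) :=
  {x | ∃ p q : WIdx L, p.1.2 = q.1.2 ∧
    (∃ (Γ₀ : Graph α) (a b : α), p.1.1 = Γ₀ + {(a, b)} ∧ q.1.1 = Γ₀ + {(b, a)}) ∧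
    x = wSingle p + wSingle q}

/-- Pluecker relators in `FW L`, applied only to pairs of edges lying in the same
piece of the partition. -/
def pluckerRelsW (L : Finset α) : Set (FW L) :=
  {x | ∃ p q r : WIdx L, p.1.2 = q.1.2 ∧ p.1.2 = r.1.2 ∧
    (∃ (Γ₀ : Graph α) (a b c d : α) (U : Finset α), U ∈ p.1.2 ∧
      a ∈ U ∧ b ∈ U ∧ c ∈ U ∧ d ∈ U ∧
      p.1.1 = Γ₀ + {(a, b), (c, d)} ∧ q.1.1 = Γ₀ + {(a, d), (c, b)} ∧
      r.1.1 = Γ₀ + {(a, c), (b, d)}) ∧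
    x = wSingle p - wSingle q - wSingle r}

/-- The defining relators of `tilde-W_L`. -/
def relsW (L : Finset α) : Set (FW L) := loopRelsW L ∪ signRelsW L ∪ pluckerRelsW L

/-- The merging relators `(Γ, 𝒰) - (Γ, 𝒰')`, where `𝒰` has at least three pieces
and `𝒰'` is obtained from `𝒰` by merging two pieces. -/
def mergeRels (L : Finset α) : Set (FW L) :=
  {x | ∃ p q : WIdx L, p.1.1 = q.1.1 ∧ 3 ≤ p.1.2.card ∧
    (∃ U₁ U₂ : Finset α, U₁ ∈ p.1.2 ∧ U₂ ∈ p.1.2 ∧ U₁ ≠ U₂ ∧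
      q.1.2 = insert (U₁ ∪ U₂) ((p.1.2.erase U₁).erase U₂)) ∧
    x = wSingle p - wSingle q}

/-- The odd cycle exchange relators
`(Γ, {U₁ ∪ U₂, U₃ ∪ U₄}) - (Γ, {U₁ ∪ U₃, U₂ ∪ U₄})`. -/
def oddExchRels (L : Finset α) : Set (FW L) :=
  {x | ∃ p q : WIdx L, p.1.1 = q.1.1 ∧
    (∃ U₁ U₂ U₃ U₄ : Finset α,
      Disjoint U₁ U₂ ∧ Disjoint U₁ U₃ ∧ Disjoint U₁ U₄ ∧ Disjoint U₂ U₃ ∧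
      Disjoint U₂ U₄ ∧ Disjoint U₃ U₄ ∧
      Odd U₁.card ∧ Odd U₂.card ∧ Odd U₃.card ∧ Odd U₄.card ∧
      U₁ ∪ U₂ ∪ U₃ ∪ U₄ = L ∧
      ClosedIn p.1.1 U₁ ∧ ClosedIn p.1.1 U₂ ∧ ClosedIn p.1.1 U₃ ∧ ClosedIn p.1.1 U₄ ∧
      p.1.2 = {U₁ ∪ U₂, U₃ ∪ U₄} ∧ q.1.2 = {U₁ ∪ U₃, U₂ ∪ U₄}) ∧
    x = wSingle p - wSingle q}

/-- All relators defining `W'_L` as a quotient of the free module `FW L`: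
the defining relators of `tilde-W_L` together with the merging and odd cycle
exchange relators. -/
def relsWMO (L : Finset α) : Set (FW L) := relsW L ∪ mergeRels L ∪ oddExchRels L

/-- Index type for `tilde-V^{(2)}_L`: two matchings (a 2-colored graph) together
with a partition closed with respect to both. -/
def VIdx (L : Finset α) : Type :=
  {p : (Graph α × Graph α) × Finset (Finset α) //
    IsRegOn L p.1.1 1 ∧ IsRegOn L p.1.2 1 ∧ IsPartitionOn L p.2 ∧
      (∀ U ∈ p.2, ClosedIn p.1.1 U) ∧ ∀ U ∈ p.2, ClosedIn p.1.2 U}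

/-- The free module on such triples; `tilde-V^{(2)}_L` is its quotient. -/
abbrev FV (L : Finset α) := VIdx L →₀ ℤ

def vSingle {L : Finset α} (p : VIdx L) : FV L := Finsupp.single p 1

/-- The forgetful map `tilde-W_L → W_L ⊆ R`, at the level of free modules. -/
def ΦW (L : Finset α) : FW L →ₗ[ℤ] RL α :=
  Finsupp.lift (RL α) ℤ (WIdx L) fun p => X p.1.1

/-- The forgetful map `tilde-V^{(2)}_L → V_L ⊗ V_L`, at the level of free modules. -/
def ΦV (L : Finset α) : FV L →ₗ[ℤ] (VL L) ⊗[ℤ] (VL L) :=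
  Finsupp.lift ((VL L) ⊗[ℤ] (VL L)) ℤ (VIdx L) fun p => vx p.2.1 ⊗ₜ[ℤ] vx p.2.2.1

/-- The map `tilde-V^{(2)}_L → tilde-W_L` (forget the coloring), at the level of
free modules. -/
def ψmap (L : Finset α) : FV L →ₗ[ℤ] FW L :=
  Finsupp.lift (FW L) ℤ (VIdx L) fun p =>
    wSingle ⟨(p.1.1.1 + p.1.1.2, p.1.2),
      p.2.1.add p.2.2.1, p.2.2.2.1,
      fun U hU => (p.2.2.2.2.1 U hU).add (p.2.2.2.2.2 U hU)⟩

/-! ### Planarity with respect to an embedding of the vertices in the unit circle -/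

/-- Two edges cross when drawn as chords: their four endpoints are distinct and the
open chords intersect. -/
def Crosses (ι : α → EuclideanSpace ℝ (Fin 2)) (e f : α × α) : Prop :=
  e.1 ≠ f.1 ∧ e.1 ≠ f.2 ∧ e.2 ≠ f.1 ∧ e.2 ≠ f.2 ∧
  (openSegment ℝ (ι e.1) (ι e.2) ∩ openSegment ℝ (ι f.1) (ι f.2)).Nonempty

/-- A graph is planar (w.r.t. the embedding `ι` of its vertices in the circle) if it
has no loops and no two of its edges cross. -/
def IsPlanarOn (ι : α → EuclideanSpace ℝ (Fin 2)) (Γ : Graph α) : Prop :=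
  (∀ e ∈ Γ, e.1 ≠ e.2) ∧ ∀ e f : α × α, {e, f} ≤ Γ → ¬ Crosses ι e f

/-- The underlying undirected edge of a directed edge. -/
def und (e : α × α) : Sym2 α := s(e.1, e.2)

/-- The underlying undirected multigraph of a directed multigraph. -/
def undG (Γ : Graph α) : Multiset (Sym2 α) := Γ.map und

/-- The number of edges of `Γ` crossed by the chord `e`. -/
def crossCount (ι : α → EuclideanSpace ℝ (Fin 2)) (e : α × α) (Γ : Graph α) : ℕ :=
  @Multiset.countP _ (fun f => Crosses ι e f) (Classical.decPred _) Γ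

/-- One-step adjacency in `Γ`. -/
def stepRel (Γ : Graph α) (a b : α) : Prop := (a, b) ∈ Γ ∨ (b, a) ∈ Γ

/-- Connectivity in `Γ`. -/
def Conn (Γ : Graph α) : α → α → Prop := Relation.ReflTransGen (stepRel Γ)

/-- All the vertices of `S` are connected to one another in `Γ`. -/
def ConnectedOn (S : Finset α) (Γ : Graph α) : Prop := ∀ a ∈ S, ∀ b ∈ S, Conn Γ a b

/-- A regular degree-two graph on `L` is forbidden if it is connected or a disjoint
union of two odd cycles. -/
def IsForbidden (L : Finset α) (Γ : Graph α) : Prop :=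
  ConnectedOn L Γ ∨
  ∃ C₁ C₂ : Finset α, Disjoint C₁ C₂ ∧ C₁ ∪ C₂ = L ∧ Odd C₁.card ∧ Odd C₂.card ∧
    ClosedIn Γ C₁ ∧ ClosedIn Γ C₂ ∧ ConnectedOn C₁ Γ ∧ ConnectedOn C₂ Γ

/-- A graph is allowable if it is not forbidden. -/
def Allowable (L : Finset α) (Γ : Graph α) : Prop := ¬ IsForbidden L Γ

/-- `𝒞` is the decomposition of the (disjoint union of cycles) graph `Γ` covering `S`
into its cycles. -/
def IsCycleDecompOn (S : Finset α) (Γ : Graph α) (𝒞 : Finset (Finset α)) : Prop :=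
  (∀ C ∈ 𝒞, C.Nonempty ∧ C ⊆ S ∧ ClosedIn Γ C ∧ ConnectedOn C Γ) ∧
    (𝒞 : Set (Finset α)).PairwiseDisjoint id ∧ ∀ v ∈ S, ∃ C ∈ 𝒞, v ∈ C

/-- A graph is quasi-planar if it is planar, or it has a doubled edge whose removal
leaves a planar graph and which crosses exactly two edges. -/
def IsQuasiPlanarOn (ι : α → EuclideanSpace ℝ (Fin 2)) (Γ : Graph α) : Prop :=
  IsPlanarOn ι Γ ∨
  ∃ (Γ' : Graph α) (a b : α) (e₁ e₂ : α × α),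
    a ≠ b ∧ und e₁ = s(a, b) ∧ und e₂ = s(a, b) ∧ Γ = Γ' + {e₁, e₂} ∧
    IsPlanarOn ι Γ' ∧ crossCount ι (a, b) Γ' = 2

/-- The level of a quasi-planar graph: the number of its cycles, not counting the
distinguished doubled edge in the non-planar case. -/
def HasLevel (ι : α → EuclideanSpace ℝ (Fin 2)) (L : Finset α) (Γ : Graph α) (i : ℕ) :
    Prop :=
  (IsPlanarOn ι Γ ∧ ∃ 𝒞, IsCycleDecompOn L Γ 𝒞 ∧ 𝒞.card = i) ∨
  (¬ IsPlanarOn ι Γ ∧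
    ∃ (Γ' : Graph α) (a b : α) (e₁ e₂ : α × α),
      a ≠ b ∧ und e₁ = s(a, b) ∧ und e₂ = s(a, b) ∧ Γ = Γ' + {e₁, e₂} ∧
      IsPlanarOn ι Γ' ∧ crossCount ι (a, b) Γ' = 2 ∧
      ∃ 𝒞, IsCycleDecompOn ((L.erase a).erase b) Γ' 𝒞 ∧ 𝒞.card = i)

/-- `Γp` is the associated planar graph of the quasi-planar graph `Γ`: either `Γ` is
planar and `Γp` is `Γ` itself (up to orientation of the edges), or `Γp` is obtained
from `Γ` by replacing the distinguished doubled edge on `{a, b}` together with the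
unique cycle `comp` that it crosses by the unique planar cycle `Z` on the same set of
vertices. -/
def AssocPlanarOf (ι : α → EuclideanSpace ℝ (Fin 2)) (L : Finset α)
    (Γ Γp : Graph α) : Prop :=
  (IsPlanarOn ι Γ ∧ undG Γp = undG Γ) ∨
  ∃ (rest comp Z : Graph α) (a b : α) (e₁ e₂ : α × α) (S : Finset α),
    a ≠ b ∧ a ∉ S ∧ b ∉ S ∧ und e₁ = s(a, b) ∧ und e₂ = s(a, b) ∧
    Γ = rest + comp + {e₁, e₂} ∧
    IsPlanarOn ι (rest + comp) ∧
    IsRegOn S comp 2 ∧ ConnectedOn S comp ∧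
    (∀ f ∈ rest, f.1 ∉ S ∧ f.2 ∉ S) ∧
    crossCount ι (a, b) comp = 2 ∧ (∀ f ∈ rest, ¬ Crosses ι (a, b) f) ∧
    IsRegOn (insert a (insert b S)) Z 2 ∧ ConnectedOn (insert a (insert b S)) Z ∧
    IsPlanarOn ι Z ∧
    Γp = rest + Z

/-- Delete all edges containing the vertex `v`. -/
def delVertex (Γ : Graph α) (v : α) : Graph α :=
  Γ.filter fun e => e.1 ≠ v ∧ e.2 ≠ v

/-- A vertex is special if deleting all edges containing it leaves a planar graph. -/
def IsSpecialVtx (ι : α → EuclideanSpace ℝ (Fin 2)) (Γ : Graph α) (v : α) : Prop :=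
  IsPlanarOn ι (delVertex Γ v)

/-- A graph is semi-planar if it contains a special vertex. -/
def SemiPlanarOn (ι : α → EuclideanSpace ℝ (Fin 2)) (L : Finset α) (Γ : Graph α) :
    Prop :=
  ∃ v ∈ L, IsSpecialVtx ι Γ v

/-- Both endpoints of `e` lie in `C`. -/
def edgeIn (e : α × α) (C : Finset α) : Prop := e.1 ∈ C ∧ e.2 ∈ C

/-- The chord `e` crosses no edge of `Γ`. -/
def NoCross (ι : α → EuclideanSpace ℝ (Fin 2)) (Γ : Graph α) (e : α × α) : Prop :=
  ∀ f ∈ Γ, ¬ Crosses ι e f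

/-- A decomposition of `Γ` into exactly two cycles. -/
def TwoCycleDecomp (L : Finset α) (Γ : Graph α) (C₁ C₂ : Finset α) : Prop :=
  C₁.Nonempty ∧ C₂.Nonempty ∧ Disjoint C₁ C₂ ∧ C₁ ∪ C₂ = L ∧
    ClosedIn Γ C₁ ∧ ClosedIn Γ C₂ ∧ ConnectedOn C₁ Γ ∧ ConnectedOn C₂ Γ

/-- A decomposition of `Γ` into exactly three cycles. -/
def ThreeCycleDecomp (L : Finset α) (Γ : Graph α) (C₁ C₂ C₃ : Finset α) : Prop :=
  C₁.Nonempty ∧ C₂.Nonempty ∧ C₃.Nonempty ∧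
    Disjoint C₁ C₂ ∧ Disjoint C₁ C₃ ∧ Disjoint C₂ C₃ ∧ C₁ ∪ C₂ ∪ C₃ = L ∧
    ClosedIn Γ C₁ ∧ ClosedIn Γ C₂ ∧ ClosedIn Γ C₃ ∧
    ConnectedOn C₁ Γ ∧ ConnectedOn C₂ Γ ∧ ConnectedOn C₃ Γ

/-- A pair of edges of an allowable graph is allowable: if the graph is a union of
two cycles, the two edges must lie in the same cycle; if it is a union of three
cycles two of which are odd, the two edges must lie in cycles of the same parity;
otherwise there is no condition. -/
def AllowablePair (L : Finset α) (Γ : Graph α) (e e' : α × α) : Prop :=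
  (∀ C₁ C₂ : Finset α, TwoCycleDecomp L Γ C₁ C₂ →
      (edgeIn e C₁ ∧ edgeIn e' C₁) ∨ (edgeIn e C₂ ∧ edgeIn e' C₂)) ∧
  (∀ C₁ C₂ C₃ : Finset α, ThreeCycleDecomp L Γ C₁ C₂ C₃ →
    Odd C₁.card → Odd C₂.card →
      ∀ C C' : Finset α, (C = C₁ ∨ C = C₂ ∨ C = C₃) → (C' = C₁ ∨ C' = C₂ ∨ C' = C₃) →
        edgeIn e C → edgeIn e' C' → (Even C.card ↔ Even C'.card))

/-- The level filtration on `W_L`: `FsubW ι L i` is the span of the classes of the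
planar regular degree-two graphs on `L` of level at least `i`. -/
def FsubW (ι : α → EuclideanSpace ℝ (Fin 2)) (L : Finset α) (i : ℕ) :
    Submodule ℤ (RL α) :=
  Submodule.span ℤ {x | ∃ Γ 𝒞, IsRegOn L Γ 2 ∧ IsPlanarOn ι Γ ∧
    IsCycleDecompOn L Γ 𝒞 ∧ i ≤ 𝒞.card ∧ x = X Γ}

/-- The level filtration on `W'_L`, at the level of the free module `FW L`:
the span of the defining relators of `W'_L` together with the generators `(Γ, 𝒰)`
with `Γ` allowable quasi-planar of level at least `i`. -/
def FsubW' (ι : α → EuclideanSpace ℝ (Fin 2)) (L : Finset α) (i : ℕ) :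
    Submodule ℤ (FW L) :=
  Submodule.span ℤ (relsWMO L ∪
    {y | ∃ p : WIdx L, Allowable L p.1.1 ∧ IsQuasiPlanarOn ι p.1.1 ∧
      (∃ j, i ≤ j ∧ HasLevel ι L p.1.1 j) ∧ y = wSingle p})

/-! ### The symmetric algebra on `V_L` -/

/-- The linearity relations turning the free commutative ring on the set `V_L` into
the symmetric algebra `Sym(V_L)` over `ℤ`. -/
def symRels (L : Finset α) : Ideal (FreeCommRing (VL L)) :=
  Ideal.span
    ({x | ∃ v w : VL L,
        x = FreeCommRing.of (v + w) - FreeCommRing.of v - FreeCommRing.of w} ∪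
     {x | ∃ (n : ℤ) (v : VL L), x = FreeCommRing.of (n • v) - n • FreeCommRing.of v})

/-- The symmetric algebra `Sym(V_L)` over `ℤ`. -/
abbrev SymV (L : Finset α) := FreeCommRing (VL L) ⧸ symRels L

/-- The degree-one generator of `Sym(V_L)` corresponding to `v ∈ V_L`. -/
def symGen {L : Finset α} (v : VL L) : SymV L :=
  Ideal.Quotient.mk (symRels L) (FreeCommRing.of v)

/-- The canonical map `Sym(V_L) → R_L` (surjective by Kempe's theorem); its kernel
is the ideal of relations `I_L`. -/
def symToR (L : Finset α) : SymV L →+* RL α :=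
  Ideal.Quotient.lift (symRels L) (FreeCommRing.lift fun v : VL L => (v : RL α))
    (by
      intro a ha
      have hle : symRels L ≤
          RingHom.ker (FreeCommRing.lift fun v : VL L => (v : RL α)) := by
        rw [symRels, Ideal.span_le]
        rintro x (⟨v, w, rfl⟩ | ⟨n, v, rfl⟩) <;>
        · show _ ∈ RingHom.ker _
          rw [RingHom.mem_ker]
          simp only [map_sub, map_zsmul, FreeCommRing.lift_of,
            Submodule.coe_add, Submodule.coe_smul]
          abel
      exact hle ha)

/-- The ideal of relations `I_L = ker (Sym(V_L) → R_L)`. -/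
def IL (L : Finset α) : Ideal (SymV L) := RingHom.ker (symToR L)

/-- The union of the matchings `Γ` and `Γ'` consists of a single 4-cycle together
with 2-cycles (doubled edges). -/
def FourCyclePlusDoubles (Γ Γ' : Graph α) : Prop :=
  ∃ (a b c d : α) (m : Multiset (Sym2 α)),
    a ≠ b ∧ a ≠ c ∧ a ≠ d ∧ b ≠ c ∧ b ≠ d ∧ c ≠ d ∧
    undG Γ + undG Γ' = {s(a, b), s(b, c), s(c, d), s(d, a)} + (m + m)

/-- The simplest binomial relations, as degree-two elements of `Sym(V_L)`:
simple binomial relations for which the union of the two matchings on `L \ U` is a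
single 4-cycle together with 2-cycles. -/
def simplestBinsSym (L : Finset α) : Set (SymV L) :=
  {x | ∃ (U : Finset α) (_ : U ⊆ L) (_ : U.card = 4)
      (Δ Δ' Γ Γ' : Graph α)
      (_ : IsRegOn U Δ 1) (_ : IsRegOn U Δ' 1)
      (_ : IsRegOn (L \ U) Γ 1) (_ : IsRegOn (L \ U) Γ' 1)
      (_ : FourCyclePlusDoubles Γ Γ')
      (h1 : IsRegOn L (Γ + Δ) 1) (h2 : IsRegOn L (Γ' + Δ') 1)
      (h3 : IsRegOn L (Γ + Δ') 1) (h4 : IsRegOn L (Γ' + Δ) 1),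
    x = symGen (vx h1) * symGen (vx h2) - symGen (vx h3) * symGen (vx h4)}

/-!
Generalise to differences `(Γ, 𝒰) - (Γ, 𝒱)` with `𝒰` refining `𝒱`, and induct on the number
of vertices lying on odd cycles of `Γ`. If there are none, `Γ` is the sum of two perfect matchings
`Δ, Δ'` (contract a path `a - b - c - d` to an edge `a - d` and recurse), and the difference is the
image of `(Δ, Δ', 𝒰) - (Δ, Δ', 𝒱) ∈ P_L`. Otherwise some piece `U` of `𝒰` contains an odd cycle,
and since `|U|` is even it contains a second one. The Plücker relation on an edge of each, valid
in `U` and in the piece of `𝒱` containing `U`, rewrites the difference as two differences of the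
same kind in which these two cycles are merged into one even cycle.
-/

section Graphs

variable {Γ Γ' Δ : Graph α} {L S T : Finset α} {u v : α} {e : α × α} {k : ℕ}

def Links (e : α × α) (u v : α) : Prop := e = (u, v) ∨ e = (v, u)

lemma Links.symm (h : Links e u v) : Links e v u := Or.symm h

lemma deg_singleton (x y v : α) :
    deg ({(x, y)} : Graph α) v = (if v = x then 1 else 0) + (if v = y then 1 else 0) := by
  simp [deg, Multiset.count_singleton]

lemma Links.deg_singleton (h : Links e u v) (w : α) :
    deg ({e} : Graph α) w = (if w = u then 1 else 0) + (if w = v then 1 else 0) := by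
  rcases h with rfl | rfl <;> simp only [HMSV.deg_singleton]; omega

lemma deg_eq_zero_iff : deg Γ v = 0 ↔ ∀ e ∈ Γ, e.1 ≠ v ∧ e.2 ≠ v := by
  simp only [deg, Nat.add_eq_zero_iff, Multiset.count_eq_zero, Multiset.mem_map, not_exists,
    not_and]
  exact ⟨fun h e he => ⟨h.1 e he, h.2 e he⟩,
    fun h => ⟨fun e he => (h e he).1, fun e he => (h e he).2⟩⟩

lemma exists_links_of_deg_pos (h : 0 < deg Γ v) : ∃ e ∈ Γ, ∃ u, Links e v u := by
  by_contra hno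
  exact h.ne' (deg_eq_zero_iff.mpr fun e he =>
    ⟨fun h1 => hno ⟨e, he, e.2, Or.inl (Prod.ext h1 rfl)⟩,
      fun h2 => hno ⟨e, he, e.1, Or.inr (Prod.ext rfl h2)⟩⟩)

lemma IsRegOn.mem_of_mem (h : IsRegOn L Γ k) (he : e ∈ Γ) :
    e.1 ∈ L ∧ e.2 ∈ L := by
  by_contra hL
  rcases not_and_or.mp hL with hL | hL
  · exact (deg_eq_zero_iff.mp (h.2 _ hL) e he).1 rfl
  · exact (deg_eq_zero_iff.mp (h.2 _ hL) e he).2 rfl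

lemma deg_pair (x y : α × α) (v : α) : deg ({x, y} : Graph α) v = deg {x} v + deg {y} v := by
  rw [Multiset.insert_eq_cons, ← Multiset.singleton_add, deg_add]

lemma IsRegOn.congr (h : IsRegOn L Γ k)
    (hdeg : ∀ v, deg Γ' v = deg Γ v) : IsRegOn L Γ' k :=
  ⟨fun v hv => (hdeg v).trans (h.1 v hv), fun v hv => (hdeg v).trans (h.2 v hv)⟩

@[simp] lemma closedIn_add : ClosedIn (Γ + Δ) S ↔ ClosedIn Γ S ∧ ClosedIn Δ S := by
  simp only [ClosedIn, Multiset.mem_add, or_imp, forall_and]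

@[simp] lemma closedIn_singleton : ClosedIn {e} S ↔ (e.1 ∈ S ↔ e.2 ∈ S) := by
  simp [ClosedIn]

lemma ClosedIn.mono (h : ClosedIn Γ S) (hΔ : Δ ≤ Γ) : ClosedIn Δ S :=
  fun e he => h e (Multiset.subset_of_le hΔ he)

lemma ClosedIn.union (hS : ClosedIn Γ S) (hT : ClosedIn Γ T) : ClosedIn Γ (S ∪ T) :=
  fun e he => by simp only [Finset.mem_union, hS e he, hT e he]

lemma ClosedIn.sdiff (hS : ClosedIn Γ S) (hT : ClosedIn Γ T) : ClosedIn Γ (S \ T) :=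
  fun e he => by simp only [Finset.mem_sdiff, hS e he, hT e he]

lemma closedIn_of_deg_eq_zero (h : ∀ v ∈ T, deg Γ v = 0) : ClosedIn Γ T := fun e he =>
  ⟨fun h1 => absurd rfl (deg_eq_zero_iff.mp (h _ h1) e he).1,
    fun h2 => absurd rfl (deg_eq_zero_iff.mp (h _ h2) e he).2⟩

lemma conn_symm (h : Conn Γ u v) : Conn Γ v u :=
  (@Relation.ReflTransGen.stdSymm _ _ ⟨fun _ _ => Or.symm⟩).symm _ _ h

lemma conn_of_links (he : e ∈ Γ) (h : Links e u v) : Conn Γ u v := by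
  rcases h with rfl | rfl
  exacts [.single (Or.inl he), .single (Or.inr he)]

lemma Conn.mono (h : Conn Γ u v) (hΓ : Γ ≤ Γ') : Conn Γ' u v :=
  Relation.ReflTransGen.mono (fun _ _ => Or.imp (Multiset.subset_of_le hΓ ·)
    (Multiset.subset_of_le hΓ ·)) _ _ h

lemma ClosedIn.mem_of_conn (hS : ClosedIn Γ S) (h : Conn Γ u v) (hu : u ∈ S) : v ∈ S := by
  induction h with
  | refl => exact hu
  | tail _ hstep ih =>
    rcases hstep with h' | h'
    exacts [(hS _ h').mp ih, (hS _ h').mpr ih]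

end Graphs

section Connectivity

variable {Γ Γ' : Graph α} {L S C : Finset α} {a b v w x y : α} {k : ℕ}

lemma conn_iff_of_forall_mem_iff
    (h : ∀ e : α × α, Conn Γ x e.1 ∨ Conn Γ x e.2 → (e ∈ Γ' ↔ e ∈ Γ)) :
    Conn Γ' x y ↔ Conn Γ x y := by
  constructor <;> intro hc
  · induction hc with
    | refl => exact .refl
    | tail _ hstep ih =>
      rcases hstep with h' | h'
      · exact ih.tail (Or.inl ((h (_, _) (Or.inl ih)).mp h'))
      · exact ih.tail (Or.inr ((h (_, _) (Or.inr ih)).mp h'))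
  · induction hc with
    | refl => exact .refl
    | tail hxb hstep ih =>
      rcases hstep with h' | h'
      · exact ih.tail (Or.inl ((h (_, _) (Or.inl hxb)).mpr h'))
      · exact ih.tail (Or.inr ((h (_, _) (Or.inr hxb)).mpr h'))

lemma conn_add_singleton_iff (h : Conn Γ a b) : Conn (Γ + {(a, b)}) x y ↔ Conn Γ x y := by
  refine ⟨fun hc => ?_, fun hc => hc.mono (Multiset.le_add_right _ _)⟩
  induction hc with
  | refl => exact .refl
  | tail _ hstep ih =>
    simp only [stepRel, Multiset.mem_add, Multiset.mem_singleton, Prod.mk.injEq] at hstep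
    rcases hstep with (h' | ⟨rfl, rfl⟩) | (h' | ⟨rfl, rfl⟩)
    · exact ih.tail (Or.inl h')
    · exact ih.trans h
    · exact ih.tail (Or.inr h')
    · exact ih.trans (conn_symm h)

lemma even_sum_deg_of_closedIn (h : ClosedIn Γ S) : Even (∑ v ∈ S, deg Γ v) := by
  induction Γ using Multiset.induction with
  | empty => simp [deg]
  | cons e Γ ih =>
    obtain ⟨x, y⟩ := e
    rw [← Multiset.singleton_add, closedIn_add, closedIn_singleton] at h
    rw [← Multiset.singleton_add]
    simp only [deg_add, Finset.sum_add_distrib]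
    refine Even.add ?_ (ih h.2)
    simp only [deg_singleton, Finset.sum_add_distrib, Finset.sum_ite_eq', h.1]
    split_ifs <;> decide

/-- Handshake: the vertices of `C` reachable from `a` in `Γ` have even total degree in `Γ`,
so they must contain `b`. -/
lemma conn_of_closedIn_add_singleton (hC : ClosedIn (Γ + {(a, b)}) C)
    (hdeg : ∀ v ∈ C, Even (deg (Γ + {(a, b)}) v)) (ha : a ∈ C) : Conn Γ a b := by
  classical
  set A := C.filter (Conn Γ a ·)
  have hA : ClosedIn Γ A := fun e he => by
    have hCe := (closedIn_add.mp hC).1 e he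
    simp only [A, Finset.mem_filter]
    exact ⟨fun h => ⟨hCe.mp h.1, h.2.tail (Or.inl he)⟩,
      fun h => ⟨hCe.mpr h.1, h.2.tail (Or.inr he)⟩⟩
  have hsum : Even (∑ v ∈ A, deg (Γ + {(a, b)}) v) :=
    Finset.even_sum _ fun v hv => hdeg v (Finset.mem_filter.mp hv).1
  simp only [deg_add, Finset.sum_add_distrib, deg_singleton, Finset.sum_ite_eq'] at hsum
  have hab := (Nat.even_add.mp hsum).mp (even_sum_deg_of_closedIn hA)
  have haA : a ∈ A := Finset.mem_filter.mpr ⟨ha, .refl⟩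
  by_contra hb
  have hbA : b ∉ A := fun h => hb (Finset.mem_filter.mp h).2
  simp [haA, hbA] at hab

end Connectivity

section Components

variable {Γ : Graph α} {L S C : Finset α} {v w : α} {k : ℕ}

open scoped Classical in
def component (L : Finset α) (Γ : Graph α) (v : α) : Finset α := {w ∈ L | Conn Γ v w}

lemma mem_component : w ∈ component L Γ v ↔ w ∈ L ∧ Conn Γ v w := by
  simp [component]

lemma component_subset : component L Γ v ⊆ L := fun _ hw => (mem_component.mp hw).1

lemma mem_component_self (hv : v ∈ L) : v ∈ component L Γ v := mem_component.mpr ⟨hv, .refl⟩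

lemma closedIn_component (h : IsRegOn L Γ k) : ClosedIn Γ (component L Γ v) := fun e he => by
  have hL := h.mem_of_mem he
  simp only [mem_component, hL, true_and]
  exact ⟨fun hc => hc.tail (Or.inl he), fun hc => hc.tail (Or.inr he)⟩

lemma component_subset_of_closedIn (hS : ClosedIn Γ S) (hv : v ∈ S) : component L Γ v ⊆ S :=
  fun _ hw => hS.mem_of_conn (mem_component.mp hw).2 hv

lemma connectedOn_component : ConnectedOn (component L Γ v) Γ := fun _ hx _ hy =>
  (conn_symm (mem_component.mp hx).2).trans (mem_component.mp hy).2

lemma component_eq (hC : ClosedIn Γ C) (hconn : ConnectedOn C Γ) (hCL : C ⊆ L) (hv : v ∈ C) :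
    component L Γ v = C :=
  (component_subset_of_closedIn hC hv).antisymm fun w hw =>
    mem_component.mpr ⟨hCL hw, hconn v hv w hw⟩

lemma disjoint_component (h : ¬ Conn Γ v w) : Disjoint (component L Γ v) (component L Γ w) :=
  Finset.disjoint_left.mpr fun _ hv hw =>
    h ((mem_component.mp hv).2.trans (conn_symm (mem_component.mp hw).2))

lemma exists_odd_component (h : IsRegOn L Γ k) (hS : ClosedIn Γ S) (hSL : S ⊆ L)
    (hodd : Odd S.card) : ∃ w ∈ S, Odd (component L Γ w).card := by
  induction hn : S.card using Nat.strong_induction_on generalizing S with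
  | _ n ih =>
  obtain ⟨u, hu⟩ := Finset.card_pos.mp hodd.pos
  by_cases hcu : Odd (component L Γ u).card
  · exact ⟨u, hu, hcu⟩
  have hsub := component_subset_of_closedIn (L := L) hS hu
  have hcard := Finset.card_sdiff_of_subset hsub
  have hle := Finset.card_le_card hsub
  have hpos := Finset.card_pos.mpr ⟨u, mem_component_self (Γ := Γ) (hSL hu)⟩
  obtain ⟨i, hi⟩ := hodd
  obtain ⟨j, hj⟩ := Nat.not_odd_iff_even.mp hcu
  obtain ⟨w, hw, hw'⟩ := ih (S \ component L Γ u).card (by omega)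
    (hS.sdiff (closedIn_component h))
    (Finset.sdiff_subset.trans hSL) ⟨i - j, by omega⟩ rfl
  exact ⟨w, Finset.sdiff_subset hw, hw'⟩

open scoped Classical in
def oddVerts (L : Finset α) (Γ : Graph α) : Finset α := {v ∈ L | Odd (component L Γ v).card}

lemma mem_oddVerts : v ∈ oddVerts L Γ ↔ v ∈ L ∧ Odd (component L Γ v).card := by
  simp [oddVerts]

lemma even_card_of_oddVerts_eq_empty (h : IsRegOn L Γ k) (h0 : oddVerts L Γ = ∅)
    (hSL : S ⊆ L) (hS : ClosedIn Γ S) : Even S.card := by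
  by_contra hodd
  obtain ⟨w, hw, hw'⟩ := exists_odd_component h hS hSL (Nat.not_even_iff_odd.mp hodd)
  simpa [h0] using mem_oddVerts.mpr ⟨hSL hw, hw'⟩

end Components

section Splitting

variable {Γ Γ' : Graph α} {L S T : Finset α} {a b c d v : α} {e f g : α × α} {k : ℕ}

lemma Links.closedIn_singleton_iff (h : Links e a b) : ClosedIn {e} S ↔ (a ∈ S ↔ b ∈ S) := by
  rcases h with rfl | rfl <;> simp [Iff.comm]

lemma IsRegOn.mem_of_links (h : IsRegOn L Γ k) (he : e ∈ Γ) (hl : Links e a b) : b ∈ L := by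
  rcases hl with rfl | rfl
  exacts [(h.mem_of_mem he).2, (h.mem_of_mem he).1]

lemma exists_eq_add_links (h : 0 < deg Γ v) : ∃ Γ' e u, Γ = Γ' + {e} ∧ Links e v u := by
  obtain ⟨e, he, u, hu⟩ := exists_links_of_deg_pos h
  exact ⟨Γ.erase e, e, u, by rw [add_comm, Multiset.singleton_add, Multiset.cons_erase he], hu⟩

lemma ite_mem_pair (hab : a ≠ b) (v : α) :
    (if v ∈ ({a, b} : Finset α) then k else 0) =
      k * ((if v = a then 1 else 0) + (if v = b then 1 else 0)) := by
  by_cases hva : v = a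
  · subst hva; simp [hab]
  by_cases hvb : v = b
  · subst hvb; simp [Ne.symm hab]
  simp [hva, hvb]

lemma isRegOn_sdiff_iff (hT : T ⊆ L) (hdeg : ∀ v, deg Γ v = deg Γ' v + if v ∈ T then k else 0) :
    IsRegOn L Γ k ↔ IsRegOn (L \ T) Γ' k := by
  simp only [IsRegOn, Finset.mem_sdiff, not_and_not_right]
  constructor
  · rintro ⟨hL, hout⟩
    refine ⟨fun v hv => ?_, fun v hv => ?_⟩
    · simpa [hL v hv.1, hv.2] using (hdeg v).symm
    · by_cases hvT : v ∈ T
      · simpa [hL v (hT hvT), hvT] using hdeg v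
      · simpa [hout v fun h => hvT (hv h), hvT] using (hdeg v).symm
  · rintro ⟨hL, hout⟩
    refine ⟨fun v hv => ?_, fun v hv => ?_⟩
    · by_cases hvT : v ∈ T
      · simp [hdeg, hout v fun _ => hvT, hvT]
      · simp [hdeg, hL v ⟨hv, hvT⟩, hvT]
    · have hvT : v ∉ T := fun h => hv (hT h)
      simp [hdeg, hout v fun h => absurd h hv, hvT]

/-- For a regular degree-two graph: all its cycles are even. -/
def ClosedSetsEven (L : Finset α) (Γ : Graph α) : Prop := ∀ S ⊆ L, ClosedIn Γ S → Even S.card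

def SplitsOn (L : Finset α) (Γ : Graph α) : Prop :=
  ∃ Δ Δ', IsRegOn L Δ 1 ∧ IsRegOn L Δ' 1 ∧ Γ = Δ + Δ'

lemma ClosedSetsEven.ne_of_links (heven : ClosedSetsEven L (Γ + {e})) (h2 : IsRegOn L (Γ + {e}) 2)
    (he : Links e a b) : a ≠ b := by
  rintro rfl
  have hea : e = (a, a) := by rcases he with rfl | rfl <;> rfl
  subst hea
  have ha : a ∈ L := (h2.mem_of_mem (e := (a, a)) (by simp)).1
  have hdeg : deg Γ a = 0 := by
    have := h2.1 a ha
    simp only [deg_add, deg_singleton, ite_true] at this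
    omega
  have hclosed : ClosedIn (Γ + {(a, a)}) {a} :=
    closedIn_add.mpr ⟨closedIn_of_deg_eq_zero (by simpa using hdeg), by simp⟩
  simpa using heven {a} (by simpa using ha) hclosed

lemma splitsOn_empty (h : IsRegOn ∅ Γ k) : SplitsOn ∅ Γ := by
  have hΓ : Γ = 0 := Multiset.eq_zero_of_forall_notMem fun e he =>
    Finset.notMem_empty _ (h.mem_of_mem he).1
  have h0 : IsRegOn (∅ : Finset α) 0 1 := ⟨by simp, by simp [deg]⟩
  exact ⟨0, 0, h0, h0, by simp [hΓ]⟩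

lemma SplitsOn.add_double (h : SplitsOn (L \ {a, b}) Γ) (ha : a ∈ L) (hb : b ∈ L) (hab : a ≠ b)
    (hf : Links f a b) (he : Links e a b) : SplitsOn L (Γ + {f} + {e}) := by
  obtain ⟨Δ, Δ', hΔ, hΔ', rfl⟩ := h
  have hpair : {a, b} ⊆ L := by simp [Finset.insert_subset_iff, ha, hb]
  refine ⟨Δ + {e}, Δ' + {f}, (isRegOn_sdiff_iff hpair fun v => ?_).mpr hΔ,
    (isRegOn_sdiff_iff hpair fun v => ?_).mpr hΔ', by abel⟩
  · rw [deg_add, he.deg_singleton, ite_mem_pair hab, one_mul]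
  · rw [deg_add, hf.deg_singleton, ite_mem_pair hab, one_mul]

/-- Undoes the contraction of the path `a - b - c - d` to the edge `a - d`. -/
lemma SplitsOn.expand (h : SplitsOn (L \ {b, c}) (Γ + {(a, d)})) (hb : b ∈ L) (hc : c ∈ L)
    (hbc : b ≠ c) (hg : Links g c d) (hf : Links f b c) (he : Links e a b) :
    SplitsOn L (Γ + {g} + {f} + {e}) := by
  obtain ⟨Δ, Δ', hΔ, hΔ', hsum⟩ := h
  wlog had : (a, d) ∈ Δ generalizing Δ Δ'
  · have had' : (a, d) ∈ Δ' := by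
      have : (a, d) ∈ Δ + Δ' := hsum ▸ Multiset.mem_add.mpr (Or.inr (Multiset.mem_singleton_self _))
      exact (Multiset.mem_add.mp this).resolve_left had
    exact this Δ' Δ hΔ' hΔ (by rw [hsum, add_comm]) had'
  obtain ⟨Δ₀, rfl⟩ : ∃ Δ₀, Δ = Δ₀ + {(a, d)} :=
    ⟨Δ.erase (a, d), by rw [add_comm, Multiset.singleton_add, Multiset.cons_erase had]⟩
  have hΓ : Γ = Δ₀ + Δ' := add_right_cancel (b := {(a, d)}) (by rw [hsum]; abel)
  have hpair : {b, c} ⊆ L := by simp [Finset.insert_subset_iff, hb, hc]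
  refine ⟨Δ₀ + {e} + {g}, Δ' + {f}, (isRegOn_sdiff_iff hpair fun v => ?_).mpr hΔ,
    (isRegOn_sdiff_iff hpair fun v => ?_).mpr hΔ', by rw [hΓ]; abel⟩
  · simp only [deg_add, deg_singleton, he.deg_singleton, hg.deg_singleton, ite_mem_pair hbc]
    omega
  · rw [deg_add, hf.deg_singleton, ite_mem_pair hbc, one_mul]

lemma ClosedSetsEven.of_add_double (h : ClosedSetsEven L (Γ + {f} + {e})) (hf : Links f a b)
    (he : Links e a b) : ClosedSetsEven (L \ {a, b}) Γ := by
  intro S hSL hS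
  have hab : a ∉ S ∧ b ∉ S := by
    constructor <;> intro h' <;> simpa using Finset.mem_sdiff.mp (hSL h')
  refine h S (hSL.trans Finset.sdiff_subset) ?_
  simp only [closedIn_add, hf.closedIn_singleton_iff, he.closedIn_singleton_iff]
  tauto

lemma ClosedSetsEven.of_expand (h : ClosedSetsEven L (Γ + {g} + {f} + {e}))
    (hreg : IsRegOn (L \ {b, c}) (Γ + {(a, d)}) 2) (hb : b ∈ L) (hc : c ∈ L) (hbc : b ≠ c)
    (hg : Links g c d) (hf : Links f b c) (he : Links e a b) :
    ClosedSetsEven (L \ {b, c}) (Γ + {(a, d)}) := by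
  intro S hSL hS
  have hbcS : b ∉ S ∧ c ∉ S := by
    constructor <;> intro h' <;> simpa using Finset.mem_sdiff.mp (hSL h')
  have hbcΓ : ClosedIn Γ {b, c} := closedIn_of_deg_eq_zero fun v hv => by
    have := hreg.2 v fun h' => (Finset.mem_sdiff.mp h').2 hv
    rw [deg_add] at this
    omega
  simp only [closedIn_add, closedIn_singleton] at hS
  have hSL' : S ⊆ L := hSL.trans Finset.sdiff_subset
  by_cases ha : a ∈ S
  · have hcard := Finset.card_union_of_disjoint (s := S) (t := {b, c})
      (by simp [Finset.disjoint_insert_right, hbcS])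
    rw [Finset.card_pair hbc] at hcard
    have := h (S ∪ {b, c}) (Finset.union_subset hSL' (by simp [Finset.insert_subset_iff, hb, hc]))
      (by
        simp only [closedIn_add, hg.closedIn_singleton_iff, hf.closedIn_singleton_iff,
          he.closedIn_singleton_iff, Finset.mem_union, Finset.mem_insert, Finset.mem_singleton]
        refine ⟨⟨⟨hS.1.union hbcΓ, ?_⟩, ?_⟩, ?_⟩ <;> simp_all)
    rw [hcard] at this
    exact (Nat.even_add.mp this).mpr even_two
  · refine h S hSL' ?_
    simp only [closedIn_add, hg.closedIn_singleton_iff, hf.closedIn_singleton_iff,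
      he.closedIn_singleton_iff]
    simp_all

theorem ClosedSetsEven.splitsOn (heven : ClosedSetsEven L Γ) (h2 : IsRegOn L Γ 2) :
    SplitsOn L Γ := by
  induction hn : L.card using Nat.strong_induction_on generalizing L Γ with
  | _ n ih =>
  rcases L.eq_empty_or_nonempty with rfl | ⟨a, ha⟩
  · exact splitsOn_empty h2
  obtain ⟨Γ₁, e, b, rfl, he⟩ := exists_eq_add_links (v := a) (by rw [h2.1 a ha]; norm_num)
  have hab := heven.ne_of_links h2 he
  have hb : b ∈ L := h2.mem_of_links (by simp) he
  obtain ⟨Γ₂, f, c, rfl, hf⟩ := exists_eq_add_links (Γ := Γ₁) (v := b) (by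
    have := h2.1 b hb
    simp only [deg_add, he.deg_singleton, if_neg (Ne.symm hab), ite_true] at this
    omega)
  have hbc : b ≠ c := by
    rw [add_right_comm] at heven h2
    exact heven.ne_of_links h2 hf
  have hc : c ∈ L := h2.mem_of_links (by simp) hf
  by_cases hca : c = a
  · subst hca
    have hpair : {c, b} ⊆ L := by simp [Finset.insert_subset_iff, ha, hb]
    refine SplitsOn.add_double (ih _ ?_ (heven.of_add_double hf.symm he) ?_ rfl) ha hb hab
      hf.symm he
    · exact hn ▸ Finset.card_lt_card (Finset.sdiff_ssubset hpair (by simp))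
    · refine (isRegOn_sdiff_iff hpair fun v => ?_).mp h2
      simp only [deg_add, hf.symm.deg_singleton, he.deg_singleton, ite_mem_pair hab]
      omega
  obtain ⟨Γ₃, g, d, rfl, hg⟩ := exists_eq_add_links (Γ := Γ₂) (v := c) (by
    have := h2.1 c hc
    simp only [deg_add, he.deg_singleton, hf.deg_singleton, if_neg hca, if_neg (Ne.symm hbc),
      ite_true] at this
    omega)
  have hpair : {b, c} ⊆ L := by simp [Finset.insert_subset_iff, hb, hc]
  have hreg : IsRegOn (L \ {b, c}) (Γ₃ + {(a, d)}) 2 := by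
    refine (isRegOn_sdiff_iff hpair fun v => ?_).mp h2
    simp only [deg_add, deg_singleton, hg.deg_singleton, hf.deg_singleton, he.deg_singleton,
      ite_mem_pair hbc]
    omega
  refine SplitsOn.expand (ih _ ?_ (heven.of_expand hreg hb hc hbc hg hf he) hreg rfl) hb hc hbc
    hg hf he
  exact hn ▸ Finset.card_lt_card (Finset.sdiff_ssubset hpair (by simp))

end Splitting

section Merging

variable {Γ Γ' Γ₀ E F : Graph α} {L C C₁ C₂ : Finset α} {a b c d v w x : α}

lemma ConnectedOn.mono (h : ConnectedOn C Γ) (hΓ : Γ ≤ Γ') : ConnectedOn C Γ' :=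
  fun x hx y hy => (h x hx y hy).mono hΓ

lemma ConnectedOn.union (h₁ : ConnectedOn C₁ Γ) (h₂ : ConnectedOn C₂ Γ) (ha : a ∈ C₁)
    (hb : b ∈ C₂) (hab : Conn Γ a b) : ConnectedOn (C₁ ∪ C₂) Γ := by
  have hfrom : ∀ z ∈ C₁ ∪ C₂, Conn Γ a z := fun z hz => (Finset.mem_union.mp hz).elim
    (h₁ a ha z) (fun hz => hab.trans (h₂ b hb z hz))
  exact fun x hx y hy => (conn_symm (hfrom x hx)).trans (hfrom y hy)

lemma connectedOn_of_eq_add (hΓ : Γ = Γ₀ + {(a, b)} + F) (hC : ClosedIn Γ C)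
    (hconn : ConnectedOn C Γ) (hdeg : ∀ v ∈ C, Even (deg Γ v)) (hF : ∀ e ∈ F, e.1 ∉ C)
    (ha : a ∈ C) : ConnectedOn C Γ₀ := by
  subst hΓ
  have hF' : ∀ e ∈ F, e.1 ∉ C ∧ e.2 ∉ C := fun e he =>
    ⟨hF e he, fun h => hF e he (((closedIn_add.mp hC).2 e he).mpr h)⟩
  have hab : Conn Γ₀ a b := by
    refine conn_of_closedIn_add_singleton (closedIn_add.mp hC).1 (fun v hv => ?_) ha
    have hFv : deg F v = 0 := deg_eq_zero_iff.mpr fun e he =>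
      ⟨fun h => (hF' e he).1 (h ▸ hv), fun h => (hF' e he).2 (h ▸ hv)⟩
    simpa [deg_add, hFv] using hdeg v hv
  intro x hx y hy
  refine (conn_add_singleton_iff hab).mp ((conn_iff_of_forall_mem_iff fun e he => ?_).mpr
    (hconn x hx y hy))
  have heF : e ∉ F := fun heF => he.elim (fun h => (hF' e heF).1 (hC.mem_of_conn h hx))
    (fun h => (hF' e heF).2 (hC.mem_of_conn h hx))
  simp [heF]

lemma component_eq_of_forall_mem_iff
    (h : ∀ e : α × α, Conn Γ x e.1 ∨ Conn Γ x e.2 → (e ∈ Γ' ↔ e ∈ Γ)) :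
    component L Γ' x = component L Γ x := by
  ext y
  simp only [mem_component, conn_iff_of_forall_mem_iff h]

lemma component_add_eq_of_notMem (hC : ClosedIn (Γ₀ + F) C)
    (hF : ∀ e ∈ F, e.1 ∈ C ∧ e.2 ∈ C) (hE : ∀ e ∈ E, e.1 ∈ C ∧ e.2 ∈ C) (hx : x ∉ C) :
    component L (Γ₀ + E) x = component L (Γ₀ + F) x := by
  refine component_eq_of_forall_mem_iff fun e he => ?_
  have hout : ¬ (e.1 ∈ C ∧ e.2 ∈ C) := fun hin => hx <| he.elim
    (fun h => hC.mem_of_conn (conn_symm h) hin.1) (fun h => hC.mem_of_conn (conn_symm h) hin.2)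
  have heE : e ∉ E := fun h => hout (hE e h)
  have heF : e ∉ F := fun h => hout (hF e h)
  simp [heE, heF]

lemma component_add_eq_union (h₁ : ConnectedOn C₁ Γ₀) (h₂ : ConnectedOn C₂ Γ₀)
    (hC : ClosedIn Γ₀ (C₁ ∪ C₂)) (hE : ∀ e ∈ E, e.1 ∈ C₁ ∪ C₂ ∧ e.2 ∈ C₁ ∪ C₂)
    (hjoin : ∃ e ∈ E, e.1 ∈ C₁ ∧ e.2 ∈ C₂) (hCL : C₁ ∪ C₂ ⊆ L) (hx : x ∈ C₁ ∪ C₂) :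
    component L (Γ₀ + E) x = C₁ ∪ C₂ := by
  obtain ⟨e, heE, he₁, he₂⟩ := hjoin
  have hle : Γ₀ ≤ Γ₀ + E := Multiset.le_add_right _ _
  refine component_eq (closedIn_add.mpr ⟨hC, fun e he => iff_of_true (hE e he).1 (hE e he).2⟩)
    ((h₁.mono hle).union (h₂.mono hle) he₁ he₂ ?_) hCL hx
  exact conn_of_links (Multiset.mem_add.mpr (Or.inr heE)) (Or.inl rfl)

lemma card_oddVerts_lt_of_merge (h2 : IsRegOn L Γ 2) (hΓ : Γ = Γ₀ + {(a, b)} + {(c, d)})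
    (hv : v ∈ L) (hvw : ¬ Conn Γ v w) (hvodd : Odd (component L Γ v).card)
    (hwodd : Odd (component L Γ w).card) (ha : a ∈ component L Γ v)
    (hb : b ∈ component L Γ v) (hc : c ∈ component L Γ w) (hd : d ∈ component L Γ w)
    (hE : ∀ e ∈ E, e.1 ∈ component L Γ v ∪ component L Γ w ∧
      e.2 ∈ component L Γ v ∪ component L Γ w)
    (hjoin : ∃ e ∈ E, e.1 ∈ component L Γ v ∧ e.2 ∈ component L Γ w) :
    (oddVerts L (Γ₀ + E)).card < (oddVerts L Γ).card := by
  set C₁ := component L Γ v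
  set C₂ := component L Γ w
  have hdisj : Disjoint C₁ C₂ := disjoint_component hvw
  have hC₁ : ClosedIn Γ C₁ := closedIn_component h2
  have hC₂ : ClosedIn Γ C₂ := closedIn_component h2
  have heven : ∀ u ∈ L, Even (deg Γ u) := fun u hu => by rw [h2.1 u hu]; exact even_two
  have hconn₁ : ConnectedOn C₁ Γ₀ := connectedOn_of_eq_add hΓ hC₁ connectedOn_component
    (fun u hu => heven u (component_subset hu)) (by
      simp only [Multiset.mem_singleton, forall_eq]
      exact Finset.disjoint_right.mp hdisj hc) ha
  have hconn₂ : ConnectedOn C₂ Γ₀ := connectedOn_of_eq_add (hΓ.trans (add_right_comm _ _ _))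
    hC₂ connectedOn_component (fun u hu => heven u (component_subset hu)) (by
      simp only [Multiset.mem_singleton, forall_eq]
      exact Finset.disjoint_left.mp hdisj ha) hc
  have hΓ₀ : Γ₀ ≤ Γ := hΓ ▸ (Multiset.le_add_right _ _).trans (Multiset.le_add_right _ _)
  have hmerged : ∀ x ∈ C₁ ∪ C₂, component L (Γ₀ + E) x = C₁ ∪ C₂ := fun x hx =>
    component_add_eq_union hconn₁ hconn₂ ((hC₁.union hC₂).mono hΓ₀) hE hjoin
      (Finset.union_subset component_subset component_subset) hx
  have hsame : ∀ x ∉ C₁ ∪ C₂, component L (Γ₀ + E) x = component L Γ x := fun x hx => by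
    have hF : ∀ e ∈ ({(a, b), (c, d)} : Graph α), e.1 ∈ C₁ ∪ C₂ ∧ e.2 ∈ C₁ ∪ C₂ := by
      simp [ha, hb, hc, hd]
    rw [hΓ, add_assoc, Multiset.singleton_add, ← Multiset.insert_eq_cons] at hC₁ hC₂ ⊢
    exact component_add_eq_of_notMem (hC₁.union hC₂) hF hE hx
  have hsub : oddVerts L (Γ₀ + E) ⊆ (oddVerts L Γ).erase v := fun x hx => by
    obtain ⟨hxL, hxodd⟩ := mem_oddVerts.mp hx
    by_cases hx' : x ∈ C₁ ∪ C₂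
    · rw [hmerged x hx', Finset.card_union_of_disjoint hdisj] at hxodd
      exact absurd (hvodd.add_odd hwodd) (Nat.not_even_iff_odd.mpr hxodd)
    · rw [hsame x hx'] at hxodd
      exact Finset.mem_erase.mpr ⟨fun h => hx' (h ▸ Finset.mem_union_left _
        (mem_component_self hv)), mem_oddVerts.mpr ⟨hxL, hxodd⟩⟩
  calc (oddVerts L (Γ₀ + E)).card ≤ ((oddVerts L Γ).erase v).card := Finset.card_le_card hsub
    _ < (oddVerts L Γ).card := Finset.card_erase_lt_of_mem (mem_oddVerts.mpr ⟨hv, hvodd⟩)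

end Merging

section PluckerMove

variable {Γ : Graph α} {L : Finset α} {e : α × α} {v u : α} {k : ℕ}

lemma add_pair (Γ₀ : Graph α) (x y : α × α) : Γ₀ + {x, y} = Γ₀ + {x} + {y} := by
  rw [Multiset.insert_eq_cons, ← Multiset.singleton_add, add_assoc]

lemma mem_component_of_links (h2 : IsRegOn L Γ k) (he : e ∈ Γ) (hl : Links e v u) (hv : v ∈ L) :
    e.1 ∈ component L Γ v ∧ e.2 ∈ component L Γ v := by
  have hC := closedIn_component (v := v) h2 e he
  rcases hl with rfl | rfl
  · exact ⟨mem_component_self hv, hC.mp (mem_component_self hv)⟩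
  · exact ⟨hC.mpr (mem_component_self hv), mem_component_self hv⟩

lemma exists_plucker_move {𝒰 : Finset (Finset α)} (h2 : IsRegOn L Γ 2)
    (h𝒰 : IsPartitionOn L 𝒰) (hclosed : ∀ U ∈ 𝒰, ClosedIn Γ U) (hodd : (oddVerts L Γ).Nonempty) :
    ∃ (Γ₀ : Graph α) (a b c d : α), ∃ U ∈ 𝒰, (a ∈ U ∧ b ∈ U ∧ c ∈ U ∧ d ∈ U) ∧
      Γ = Γ₀ + {(a, b), (c, d)} ∧
      (oddVerts L (Γ₀ + {(a, d), (c, b)})).card < (oddVerts L Γ).card ∧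
      (oddVerts L (Γ₀ + {(a, c), (b, d)})).card < (oddVerts L Γ).card := by
  obtain ⟨v, hv⟩ := hodd
  obtain ⟨hvL, hvodd⟩ := mem_oddVerts.mp hv
  obtain ⟨U, hU, hvU⟩ := h𝒰.2.2.2 v hvL
  have hC₁U := component_subset_of_closedIn (L := L) (hclosed U hU) hvU
  obtain ⟨w, hw, hwodd⟩ : ∃ w ∈ U \ component L Γ v, Odd (component L Γ w).card := by
    refine exists_odd_component h2 ((hclosed U hU).sdiff (closedIn_component h2))
      (Finset.sdiff_subset.trans (h𝒰.2.1 U hU).1) ?_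
    rw [Finset.card_sdiff_of_subset hC₁U]
    exact Nat.Even.sub_odd (Finset.card_le_card hC₁U) (h𝒰.2.1 U hU).2 hvodd
  obtain ⟨hwU, hwC₁⟩ := Finset.mem_sdiff.mp hw
  have hwL := (h𝒰.2.1 U hU).1 hwU
  have hC₂U := component_subset_of_closedIn (L := L) (hclosed U hU) hwU
  have hvw : ¬ Conn Γ v w := fun h => hwC₁ (mem_component.mpr ⟨hwL, h⟩)
  obtain ⟨Γ₁, e₁, u₁, rfl, he₁⟩ := exists_eq_add_links (v := v) (by rw [h2.1 v hvL]; norm_num)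
  have he₁C := mem_component_of_links h2 (by simp) he₁ hvL
  obtain ⟨Γ₀, e₂, u₂, rfl, he₂⟩ := exists_eq_add_links (Γ := Γ₁) (v := w) (by
    have hw0 : deg {e₁} w = 0 := deg_eq_zero_iff.mpr (by
      simpa using ⟨fun h => hwC₁ (h ▸ he₁C.1), fun h => hwC₁ (h ▸ he₁C.2)⟩)
    have := h2.1 w hwL
    rw [deg_add, hw0] at this
    omega)
  have he₂C := mem_component_of_links h2 (by simp) he₂ hwL
  obtain ⟨a, b⟩ := e₁
  obtain ⟨c, d⟩ := e₂
  have hΓ : Γ₀ + {(c, d)} + {(a, b)} = Γ₀ + {(a, b)} + {(c, d)} := add_right_comm _ _ _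
  refine ⟨Γ₀, a, b, c, d, U, hU, ⟨hC₁U he₁C.1, hC₁U he₁C.2, hC₂U he₂C.1, hC₂U he₂C.2⟩,
    by rw [add_pair, hΓ], ?_, ?_⟩
  · exact card_oddVerts_lt_of_merge h2 hΓ hvL hvw hvodd hwodd he₁C.1 he₁C.2 he₂C.1 he₂C.2
      (by simp [he₁C, he₂C]) ⟨(a, d), by simp, he₁C.1, he₂C.2⟩
  · exact card_oddVerts_lt_of_merge h2 hΓ hvL hvw hvodd hwodd he₁C.1 he₁C.2 he₂C.1 he₂C.2
      (by simp [he₁C, he₂C]) ⟨(a, c), by simp, he₁C.1, he₂C.1⟩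

end PluckerMove

section ImageOfAlpha

variable {L : Finset α}

/-- The preimage in `FW L` of the image of `α_L`: elements of `P_L` are represented by the
`x : FV L` with `ΦV L x = 0`, and `α_L` sends the class of `x` to the class of `ψmap L x` in
`tilde-W_L = FW L / span (relsW L)`. -/
def imageAlpha (L : Finset α) : Submodule ℤ (FW L) :=
  (LinearMap.ker (ΦV L)).map (ψmap L) ⊔ Submodule.span ℤ (relsW L)

lemma mem_imageAlpha_iff {z : FW L} :
    z ∈ imageAlpha L ↔ ∃ x : FV L, ΦV L x = 0 ∧ ψmap L x - z ∈ Submodule.span ℤ (relsW L) := by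
  constructor
  · intro hz
    obtain ⟨_, ⟨x, hx, rfl⟩, r, hr, rfl⟩ := Submodule.mem_sup.mp hz
    exact ⟨x, hx, by simpa using Submodule.neg_mem _ hr⟩
  · rintro ⟨x, hx, hr⟩
    exact Submodule.mem_sup.mpr
      ⟨ψmap L x, ⟨x, hx, rfl⟩, -(ψmap L x - z), Submodule.neg_mem _ hr, by abel⟩

lemma ψmap_vSingle (p : VIdx L) (q : WIdx L) (hq : q.1 = (p.1.1.1 + p.1.1.2, p.1.2)) :
    ψmap L (vSingle p) = wSingle q := by
  obtain ⟨_, _⟩ := q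
  subst hq
  simp [ψmap, vSingle, wSingle]

lemma ΦV_vSingle (p : VIdx L) : ΦV L (vSingle p) = vx p.2.1 ⊗ₜ[ℤ] vx p.2.2.1 := by
  simp [ΦV, vSingle, Finsupp.sum_single_index]

lemma wSingle_sub_mem_imageAlpha_of_splitsOn (p q : WIdx L) (hpq : p.1.1 = q.1.1)
    (h : SplitsOn L p.1.1) : wSingle p - wSingle q ∈ imageAlpha L := by
  obtain ⟨Δ, Δ', hΔ, hΔ', hΓ⟩ := h
  have hle : Δ ≤ p.1.1 := hΓ ▸ Multiset.le_add_right _ _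
  have hle' : Δ' ≤ p.1.1 := hΓ ▸ Multiset.le_add_left _ _
  let colour (r : WIdx L) (hr : r.1.1 = p.1.1) : VIdx L :=
    ⟨((Δ, Δ'), r.1.2), hΔ, hΔ', r.2.2.1, fun U hU => (r.2.2.2 U hU).mono (hr ▸ hle),
      fun U hU => (r.2.2.2 U hU).mono (hr ▸ hle')⟩
  refine Submodule.mem_sup_left
    ⟨vSingle (colour p rfl) - vSingle (colour q hpq.symm), LinearMap.mem_ker.mpr ?_, ?_⟩
  · rw [map_sub, ΦV_vSingle, ΦV_vSingle, sub_self]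
  · rw [map_sub, ψmap_vSingle _ p (Prod.ext hΓ rfl),
      ψmap_vSingle _ q (Prod.ext (hpq.symm.trans hΓ) rfl)]

lemma IsPartitionOn.closedIn {𝒰 : Finset (Finset α)} {U W : Finset α} {E : Graph α}
    (h𝒰 : IsPartitionOn L 𝒰) (hU : U ∈ 𝒰) (hW : W ∈ 𝒰) (hE : ∀ e ∈ E, e.1 ∈ W ∧ e.2 ∈ W) :
    ClosedIn E U := by
  intro e he
  by_cases hUW : U = W
  · exact hUW ▸ iff_of_true (hE e he).1 (hE e he).2
  · have hd := Finset.disjoint_right.mp (h𝒰.2.2.1 hU hW hUW)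
    exact iff_of_false (hd (hE e he).1) (hd (hE e he).2)

def WIdx.exchange (r : WIdx L) {Γ₀ F E : Graph α} {W : Finset α} (hW : W ∈ r.1.2)
    (hr : r.1.1 = Γ₀ + F) (hdeg : ∀ v, deg E v = deg F v) (hE : ∀ e ∈ E, e.1 ∈ W ∧ e.2 ∈ W) :
    WIdx L :=
  ⟨(Γ₀ + E, r.1.2), (hr ▸ r.2.1).congr fun v => by simp only [deg_add, hdeg], r.2.2.1,
    fun U hU => closedIn_add.mpr
      ⟨(r.2.2.2 U hU).mono (hr ▸ Multiset.le_add_right _ _), r.2.2.1.closedIn hU hW hE⟩⟩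

lemma wSingle_sub_mem_imageAlpha_of_plucker (p q : WIdx L) (hpq : p.1.1 = q.1.1)
    {U V : Finset α} (hU : U ∈ p.1.2) (hV : V ∈ q.1.2) (hUV : U ⊆ V) {Γ₀ : Graph α}
    {a b c d : α} (habcd : a ∈ U ∧ b ∈ U ∧ c ∈ U ∧ d ∈ U) (hΓ : p.1.1 = Γ₀ + {(a, b), (c, d)})
    (hchild : ∀ p' q' : WIdx L, p'.1.1 = q'.1.1 → p'.1.2 = p.1.2 → q'.1.2 = q.1.2 →
      (p'.1.1 = Γ₀ + {(a, d), (c, b)} ∨ p'.1.1 = Γ₀ + {(a, c), (b, d)}) →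
      wSingle p' - wSingle q' ∈ imageAlpha L) :
    wSingle p - wSingle q ∈ imageAlpha L := by
  have hdeg₁ : ∀ v, deg ({(a, d), (c, b)} : Graph α) v = deg {(a, b), (c, d)} v := fun v => by
    simp only [deg_pair, deg_singleton]; omega
  have hdeg₂ : ∀ v, deg ({(a, c), (b, d)} : Graph α) v = deg {(a, b), (c, d)} v := fun v => by
    simp only [deg_pair, deg_singleton]; omega
  have hrel : ∀ (r : WIdx L) {W : Finset α} (hW : W ∈ r.1.2) (hr : r.1.1 = Γ₀ + {(a, b), (c, d)})
      (hWabcd : a ∈ W ∧ b ∈ W ∧ c ∈ W ∧ d ∈ W),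
      wSingle r - wSingle (r.exchange hW hr hdeg₁ (by simp [hWabcd]))
        - wSingle (r.exchange hW hr hdeg₂ (by simp [hWabcd])) ∈ Submodule.span ℤ (relsW L) :=
    fun r W hW hr ⟨ha, hb, hc, hd⟩ => Submodule.subset_span
      (Or.inr ⟨r, r.exchange hW hr hdeg₁ _, r.exchange hW hr hdeg₂ _, rfl, rfl,
        ⟨Γ₀, a, b, c, d, W, hW, ha, hb, hc, hd, hr, rfl, rfl⟩, rfl⟩)
  have hVabcd : a ∈ V ∧ b ∈ V ∧ c ∈ V ∧ d ∈ V :=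
    ⟨hUV habcd.1, hUV habcd.2.1, hUV habcd.2.2.1, hUV habcd.2.2.2⟩
  have hp := hrel p hU hΓ habcd
  have hq := hrel q hV (hpq ▸ hΓ) hVabcd
  set p₁ := p.exchange hU hΓ hdeg₁ (by simp [habcd])
  set p₂ := p.exchange hU hΓ hdeg₂ (by simp [habcd])
  set q₁ := q.exchange hV (hpq ▸ hΓ) hdeg₁ (by simp [hVabcd])
  set q₂ := q.exchange hV (hpq ▸ hΓ) hdeg₂ (by simp [hVabcd])
  have hsplit : wSingle p - wSingle q = (wSingle p - wSingle p₁ - wSingle p₂)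
      - (wSingle q - wSingle q₁ - wSingle q₂) + (wSingle p₁ - wSingle q₁)
      + (wSingle p₂ - wSingle q₂) := by abel
  rw [hsplit]
  exact add_mem (add_mem (sub_mem (Submodule.mem_sup_right hp) (Submodule.mem_sup_right hq))
    (hchild p₁ q₁ rfl rfl rfl (Or.inl rfl))) (hchild p₂ q₂ rfl rfl rfl (Or.inr rfl))

theorem wSingle_sub_mem_imageAlpha (p q : WIdx L) (hpq : p.1.1 = q.1.1)
    (href : ∀ U ∈ p.1.2, ∃ V ∈ q.1.2, U ⊆ V) : wSingle p - wSingle q ∈ imageAlpha L := by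
  induction hn : (oddVerts L p.1.1).card using Nat.strong_induction_on generalizing p q with
  | _ n ih =>
  rcases (oddVerts L p.1.1).eq_empty_or_nonempty with h0 | hodd
  · exact wSingle_sub_mem_imageAlpha_of_splitsOn p q hpq <| ClosedSetsEven.splitsOn
      (fun _ hSL hS => even_card_of_oddVerts_eq_empty p.2.1 h0 hSL hS) p.2.1
  obtain ⟨Γ₀, a, b, c, d, U, hU, habcd, hΓ, hlt₁, hlt₂⟩ :=
    exists_plucker_move p.2.1 p.2.2.1 p.2.2.2 hodd
  obtain ⟨V, hV, hUV⟩ := href U hU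
  refine wSingle_sub_mem_imageAlpha_of_plucker p q hpq hU hV hUV habcd hΓ
    fun p' q' hpq' hp' hq' hchild => ih _ ?_ p' q' hpq' (by rwa [hp', hq']) rfl
  rcases hchild with h | h <;> rw [h, ← hn]
  exacts [hlt₁, hlt₂]

end ImageOfAlpha

theorem merging_relations_in_image_of_alpha_general (L : Finset α) :
    ∀ z ∈ mergeRels L, ∃ x : FV L,
      ΦV L x = 0 ∧ ψmap L x - z ∈ Submodule.span ℤ (relsW L) := by
  rintro _ ⟨p, q, hpq, -, ⟨U₁, U₂, -, -, -, hq⟩, rfl⟩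
  refine mem_imageAlpha_iff.mp (wSingle_sub_mem_imageAlpha p q hpq fun U hU => ?_)
  rw [hq]
  by_cases hU₁ : U = U₁
  · exact ⟨U₁ ∪ U₂, Finset.mem_insert_self _ _, hU₁ ▸ Finset.subset_union_left⟩
  by_cases hU₂ : U = U₂
  · exact ⟨U₁ ∪ U₂, Finset.mem_insert_self _ _, hU₂ ▸ Finset.subset_union_right⟩
  exact ⟨U, Finset.mem_insert_of_mem (Finset.mem_erase.mpr ⟨hU₂, Finset.mem_erase.mpr ⟨hU₁, hU⟩⟩),
    subset_rfl⟩

/-- for an even set `L`, every merging relation lies in the image of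
`α_L : P_L → Q_L` (over `ℤ`).  (Upstairs: `P_L` is represented by the `x : FV L`
with `ΦV x = 0`, and `α_L (class of x) = class of (ψ x)` in
`tilde-W_L = FW L / span (relsW L)`.) -/
theorem merging_relations_in_image_of_alpha (L : Finset α) (heven : Even L.card) :
    ∀ z ∈ mergeRels L, ∃ x : FV L,
      ΦV L x = 0 ∧ ψmap L x - z ∈ Submodule.span ℤ (relsW L) :=
  merging_relations_in_image_of_alpha_general L

end HMSV

end
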